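/- In the algebra F_2[e_0, e_1, ...]/(e_n^2 : n) with |e_n| = 2^{n+1}, for integers n > k ≥ 2, multiplication by the element e(n,k) = e_{n-2}e_{n-3}···e_k induces an isomorphism from the degree-0 component onto the degree-(2^n − 2^{k+1}) component. -/

import Mathlib

open scoped BigOperators

noncomputable section

/-- The relations `eₙ² = 0` on the polynomial algebra `𝔽₂[e₀, e₁, ...]`. -/
inductive ERel : MvPolynomial ℕ (ZMod 2) → MvPolynomial ℕ (ZMod 2) → Prop
  | sq (n : ℕ) : ERel (MvPolynomial.X n ^ 2) 0

/-- The algebra `𝔽₂[e₀, e₁, ...]/(eₙ², n ∈ ℕ)`. -/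
abbrev ExtAlg : Type := RingQuot ERel

/-- The class `eₙ`, of degree `2^(n+1)`. -/
def e (n : ℕ) : ExtAlg := RingQuot.mkAlgHom (ZMod 2) ERel (MvPolynomial.X n)

/-- The degree-`d` component of `𝔽₂[e₀, e₁, ...]/(eₙ²)` for the grading in which
`eₙ` has degree `2^(n+1)`: the span of the images of the monomials of weighted degree `d`. -/
def extAlgGrade (d : ℕ) : Submodule (ZMod 2) ExtAlg :=
  Submodule.span (ZMod 2)
    {x : ExtAlg | ∃ m : ℕ →₀ ℕ, (m.sum fun n k => k * 2 ^ (n + 1)) = d ∧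
      x = RingQuot.mkAlgHom (ZMod 2) ERel (MvPolynomial.monomial m 1)}

open MvPolynomial

/-! ### Auxiliary lemmas -/

/-- Injectivity of sums of distinct powers of two. -/
lemma aux_sum_two_pow_injective :
    Function.Injective (fun S : Finset ℕ => ∑ i ∈ S, 2 ^ i) := by
  have key : ∀ S : Finset ℕ, Nat.bitIndices (∑ i ∈ S, 2 ^ i) = S.sort (· ≤ ·) := by
    intro S
    have h1 : ∑ i ∈ S, 2 ^ i = ((S.sort (· ≤ ·)).map (fun i => 2 ^ i)).sum := by
      rw [← Multiset.sum_coe, ← Multiset.map_coe, Finset.sort_eq]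
      rfl
    rw [h1, Nat.bitIndices_twoPowsum (Finset.sortedLT_sort S)]
  intro S T h
  have h' : ∑ i ∈ S, 2 ^ i = ∑ i ∈ T, 2 ^ i := h
  have h2 : S.sort (· ≤ ·) = T.sort (· ≤ ·) := by
    rw [← key S, ← key T, h']
  have := congrArg List.toFinset h2
  rwa [Finset.sort_toFinset, Finset.sort_toFinset] at this

/-- The ideal generated by the relations is the ideal of squares. -/
lemma aux_mem_ofRel_coeff {p : MvPolynomial ℕ (ZMod 2)} (hp : p ∈ Ideal.ofRel ERel)
    (m : ℕ →₀ ℕ) (hm : ∀ i, m i ≤ 1) : MvPolynomial.coeff m p = 0 := by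
  revert m
  refine Submodule.span_induction ?_ ?_ ?_ ?_ hp
  · rintro x ⟨a, b, hab, hx⟩ m hm
    obtain ⟨i⟩ := hab
    have hx' : x = MvPolynomial.X (R := ZMod 2) i ^ 2 := by
      simpa using hx
    subst hx'
    rw [X_pow_eq_monomial, coeff_monomial, if_neg]
    intro hsm
    have := hm i
    rw [← hsm] at this
    simp at this
  · intro m _; simp
  · intro x y _ _ hx hy m hm
    simp [hx m hm, hy m hm]
  · intro r x _ hx m hm
    rw [smul_eq_mul, coeff_mul]
    refine Finset.sum_eq_zero fun q hq => ?_
    rw [Finset.HasAntidiagonal.mem_antidiagonal] at hq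
    have hq2 : ∀ i, q.2 i ≤ 1 := by
      intro i
      have : q.2 i ≤ m i := by
        rw [← hq]; simp
      exact this.trans (hm i)
    rw [hx q.2 hq2, mul_zero]

/-- A squarefree monomial is nonzero in `ExtAlg`. -/
lemma aux_mk_monomial_ne_zero (m : ℕ →₀ ℕ) (hm : ∀ i, m i ≤ 1) :
    RingQuot.mkAlgHom (ZMod 2) ERel (MvPolynomial.monomial m 1) ≠ 0 := by
  intro h
  have h0 : RingQuot.mkRingHom ERel (MvPolynomial.monomial m (1 : ZMod 2)) = 0 := by
    rw [← RingQuot.mkAlgHom_coe (ZMod 2)]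
    exact h
  have h2 := congrArg (RingQuot.ringQuotToIdealQuotient ERel) h0
  rw [RingQuot.ringQuotToIdealQuotient_apply, map_zero] at h2
  have h3 : (MvPolynomial.monomial m (1 : ZMod 2)) ∈ Ideal.ofRel ERel :=
    (Ideal.Quotient.eq_zero_iff_mem).1 h2
  have := aux_mem_ofRel_coeff h3 m hm
  rw [coeff_monomial, if_pos rfl] at this
  exact one_ne_zero this

/-- A non-squarefree monomial is zero in `ExtAlg`. -/
lemma aux_mk_monomial_eq_zero (m : ℕ →₀ ℕ) (i : ℕ) (hi : 2 ≤ m i) :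
    RingQuot.mkAlgHom (ZMod 2) ERel (MvPolynomial.monomial m 1) = 0 := by
  have hle : Finsupp.single i 2 ≤ m := by
    intro j
    rcases eq_or_ne j i with rfl | hj
    · simpa using hi
    · simp [Finsupp.single_apply, Ne.symm hj]
  have hsum : Finsupp.single i 2 + (m - Finsupp.single i 2) = m := by
    rw [add_tsub_cancel_of_le hle]
  have hfact : (MvPolynomial.monomial m (1 : ZMod 2)) =
      MvPolynomial.X i ^ 2 * MvPolynomial.monomial (m - Finsupp.single i 2) 1 := by
    rw [X_pow_eq_monomial, monomial_mul, one_mul, hsum]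
  rw [hfact, map_mul]
  have : RingQuot.mkAlgHom (ZMod 2) ERel (MvPolynomial.X i ^ 2) = 0 := by
    have := RingQuot.mkAlgHom_rel (ZMod 2) (ERel.sq i)
    simpa using this
  rw [this, zero_mul]

/-- The indicator finsupp of a finset. -/
def aux_ind (S : Finset ℕ) : ℕ →₀ ℕ := ∑ i ∈ S, Finsupp.single i 1

lemma aux_ind_apply (S : Finset ℕ) (j : ℕ) :
    aux_ind S j = if j ∈ S then 1 else 0 := by
  classical
  rw [aux_ind, Finset.sum_apply']
  simp [Finsupp.single_apply, Finset.sum_ite_eq' S j]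

lemma aux_ind_support (S : Finset ℕ) : (aux_ind S).support = S := by
  ext j
  simp [Finsupp.mem_support_iff, aux_ind_apply]

lemma aux_ind_sqfree (S : Finset ℕ) : ∀ i, aux_ind S i ≤ 1 := by
  intro i; rw [aux_ind_apply]; split <;> simp

lemma aux_ind_degree (S : Finset ℕ) :
    ((aux_ind S).sum fun n k => k * 2 ^ (n + 1)) = ∑ i ∈ S, 2 ^ (i + 1) := by
  rw [Finsupp.sum, aux_ind_support]
  refine Finset.sum_congr rfl fun i hi => ?_
  rw [aux_ind_apply, if_pos hi, one_mul]

/-- A squarefree finsupp is the indicator of its support. -/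
lemma aux_sqfree_eq_ind (m : ℕ →₀ ℕ) (hm : ∀ i, m i ≤ 1) : m = aux_ind m.support := by
  ext j
  rw [aux_ind_apply]
  split
  · next h =>
      have h1 := Finsupp.mem_support_iff.1 h
      have h2 := hm j
      omega
  · next h => simpa using (Finsupp.notMem_support_iff.1 h)

lemma aux_sqfree_degree (m : ℕ →₀ ℕ) (hm : ∀ i, m i ≤ 1) :
    (m.sum fun n k => k * 2 ^ (n + 1)) = ∑ i ∈ m.support, 2 ^ (i + 1) := by
  conv_lhs => rw [aux_sqfree_eq_ind m hm]
  rw [aux_ind_degree]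

lemma aux_sum_shift (S : Finset ℕ) :
    ∑ i ∈ S, 2 ^ (i + 1) = ∑ j ∈ S.image (· + 1), 2 ^ j := by
  rw [Finset.sum_image (by intro a _ b _ h; beta_reduce at h; omega)]

/-- Uniqueness: same shifted power sums ⇒ same finsets. -/
lemma aux_sum_shift_inj (S T : Finset ℕ)
    (h : ∑ i ∈ S, 2 ^ (i + 1) = ∑ i ∈ T, 2 ^ (i + 1)) : S = T := by
  rw [aux_sum_shift, aux_sum_shift] at h
  have h2 := aux_sum_two_pow_injective h
  ext j
  have : j + 1 ∈ S.image (· + 1) ↔ j + 1 ∈ T.image (· + 1) := by rw [h2]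
  simpa using this

lemma aux_geom (a b : ℕ) (h : a ≤ b) : (∑ i ∈ Finset.Ico a b, 2 ^ i) + 2 ^ a = 2 ^ b := by
  induction b with
  | zero =>
    interval_cases a
    simp
  | succ b ih =>
    rcases Nat.lt_or_ge a (b + 1) with h1 | h1
    · have h2 : a ≤ b := by omega
      rw [Finset.sum_Ico_succ_top h2]
      have := ih h2
      have : 2 ^ (b + 1) = 2 ^ b + 2 ^ b := by rw [pow_succ]; omega
      omega
    · have : a = b + 1 := by omega
      subst this
      simp

/-- The product of the `e i` over a finset equals the image of the indicator monomial. -/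
lemma aux_prod_e (S : Finset ℕ) :
    ∏ i ∈ S, e i = RingQuot.mkAlgHom (ZMod 2) ERel (MvPolynomial.monomial (aux_ind S) 1) := by
  have hX : ∏ i ∈ S, MvPolynomial.X (R := ZMod 2) i
      = MvPolynomial.monomial (aux_ind S) 1 := by
    classical
    induction S using Finset.induction with
    | empty => simp [aux_ind, MvPolynomial.monomial_zero', MvPolynomial.C_1]
    | insert _ _ hnotmem ih =>
      next a s =>
      rw [Finset.prod_insert hnotmem, ih, X, monomial_mul, one_mul, aux_ind, aux_ind,
        Finset.sum_insert hnotmem]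
  rw [← hX, map_prod]
  rfl

/-- The degree-0 component equals the span of `1`. -/
lemma aux_grade_zero : extAlgGrade 0 = Submodule.span (ZMod 2) {(1 : ExtAlg)} := by
  apply le_antisymm
  · rw [extAlgGrade, Submodule.span_le]
    rintro x ⟨m, hm, rfl⟩
    have hm0 : m = 0 := by
      ext j
      by_contra hj
      have hjs : j ∈ m.support := Finsupp.mem_support_iff.2 hj
      have hle : m j * 2 ^ (j + 1) ≤ ∑ i ∈ m.support, m i * 2 ^ (i + 1) :=
        Finset.single_le_sum (f := fun i => m i * 2 ^ (i + 1)) (fun i _ => Nat.zero_le _) hjs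
      rw [Finsupp.sum] at hm
      rw [hm] at hle
      have : 1 ≤ m j := Nat.one_le_iff_ne_zero.2 hj
      have : 2 ^ (j + 1) ≤ m j * 2 ^ (j + 1) := Nat.le_mul_of_pos_left _ (by omega)
      have hp : 0 < 2 ^ (j + 1) := Nat.pow_pos (by norm_num)
      omega
    subst hm0
    have : (MvPolynomial.monomial (0 : ℕ →₀ ℕ) (1 : ZMod 2)) = 1 := by
      simp [MvPolynomial.monomial_zero', MvPolynomial.C_1]
    rw [this, map_one]
    exact Submodule.subset_span rfl
  · rw [Submodule.span_le]
    rintro x rfl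
    apply Submodule.subset_span
    exact ⟨0, by simp, by simp [MvPolynomial.monomial_zero', MvPolynomial.C_1]⟩

/-- The degree-`d` component for `d = ∑_{i ∈ S} 2^(i+1)` equals the span of `∏ eᵢ`. -/
lemma aux_grade_d (S : Finset ℕ) :
    extAlgGrade (∑ i ∈ S, 2 ^ (i + 1)) = Submodule.span (ZMod 2) {∏ i ∈ S, e i} := by
  apply le_antisymm
  · rw [extAlgGrade, Submodule.span_le]
    rintro x ⟨m, hm, rfl⟩
    by_cases hsq : ∀ i, m i ≤ 1
    · have hdeg := aux_sqfree_degree m hsq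
      rw [hm] at hdeg
      have hsupp : m.support = S := aux_sum_shift_inj _ _ hdeg.symm
      have : m = aux_ind S := by rw [aux_sqfree_eq_ind m hsq, hsupp]
      subst this
      rw [← aux_prod_e]
      exact Submodule.subset_span rfl
    · push_neg at hsq
      obtain ⟨i, hi⟩ := hsq
      rw [aux_mk_monomial_eq_zero m i hi]
      exact Submodule.zero_mem _
  · rw [Submodule.span_le]
    rintro x rfl
    apply Submodule.subset_span
    exact ⟨aux_ind S, by rw [aux_ind_degree], (aux_prod_e S).symm ▸ rfl⟩

/-- For `n > k ≥ 2`, multiplication by `e(n,k) = e_{n-2} e_{n-3} ⋯ e_k` induces an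
isomorphism from the degree-`0` component of `𝔽₂[e₀, e₁, ...]/(eₙ²)` onto the
degree-`(2^n − 2^(k+1))` component. -/
theorem mul_e_n_k_iso (n k : ℕ) (hk : 2 ≤ k) (hkn : k < n) :
    ∃ f : extAlgGrade 0 ≃ₗ[ZMod 2] extAlgGrade (2 ^ n - 2 ^ (k + 1)),
      ∀ x : extAlgGrade 0,
        (f x : ExtAlg) = (∏ i ∈ Finset.Ico k (n - 1), e i) * (x : ExtAlg) := by
  set S : Finset ℕ := Finset.Ico k (n - 1) with hS
  set P : ExtAlg := ∏ i ∈ S, e i with hP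
  -- degree computation
  have hdeg : ∑ i ∈ S, 2 ^ (i + 1) = 2 ^ n - 2 ^ (k + 1) := by
    rw [aux_sum_shift, hS]
    have himg : (Finset.Ico k (n - 1)).image (· + 1) = Finset.Ico (k + 1) n := by
      rw [Finset.image_add_right_Ico]
      congr 1
      omega
    rw [himg]
    have := aux_geom (k + 1) n (by omega)
    omega
  have hgd : extAlgGrade (2 ^ n - 2 ^ (k + 1)) = Submodule.span (ZMod 2) {P} := by
    rw [← hdeg, aux_grade_d]
  have hg0 : extAlgGrade 0 = Submodule.span (ZMod 2) {(1 : ExtAlg)} := aux_grade_zero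
  -- nonvanishing
  have hPne : P ≠ 0 := by
    rw [hP, aux_prod_e]
    exact aux_mk_monomial_ne_zero _ (aux_ind_sqfree S)
  -- the linear map
  have hmem : ∀ x : ExtAlg, x ∈ extAlgGrade 0 → P * x ∈ extAlgGrade (2 ^ n - 2 ^ (k + 1)) := by
    intro x hx
    rw [hg0, Submodule.mem_span_singleton] at hx
    obtain ⟨c, rfl⟩ := hx
    rw [hgd, Submodule.mem_span_singleton]
    exact ⟨c, by rw [mul_smul_comm, mul_one]⟩
  let L : extAlgGrade 0 →ₗ[ZMod 2] extAlgGrade (2 ^ n - 2 ^ (k + 1)) :=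
    { toFun := fun x => ⟨P * (x : ExtAlg), hmem x x.2⟩
      map_add' := fun x y => by
        ext
        simp [mul_add]
      map_smul' := fun c x => by
        ext
        simp [mul_smul_comm] }
  have hbij : Function.Bijective L := by
    constructor
    · intro x y hxy
      have hx := Submodule.mem_span_singleton.1 (hg0.le x.2)
      have hy := Submodule.mem_span_singleton.1 (hg0.le y.2)
      obtain ⟨c, hc⟩ := hx
      obtain ⟨d, hd⟩ := hy
      have hval : P * (x : ExtAlg) = P * (y : ExtAlg) := congrArg Subtype.val hxy
      rw [← hc, ← hd] at hval
      rw [mul_smul_comm, mul_smul_comm, mul_one] at hval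
      have hcd : c = d := by
        by_contra hne
        exact hne (smul_left_injective (ZMod 2) hPne hval)
      ext
      rw [← hc, ← hd, hcd]
    · intro y
      have hy := Submodule.mem_span_singleton.1 (hgd.le y.2)
      obtain ⟨c, hc⟩ := hy
      refine ⟨⟨c • 1, hg0.ge
        (Submodule.smul_mem _ _ (Submodule.mem_span_singleton_self _))⟩, ?_⟩
      · ext
        show P * (c • (1 : ExtAlg)) = (y : ExtAlg)
        rw [mul_smul_comm, mul_one, hc]
  exact ⟨LinearEquiv.ofBijective L hbij, fun x => rfl⟩
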